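/- Let p, q ∈ [1,∞] with 1/p + 1/q = 1, let F ⊆ [0,1]ⁿ be a nonempty convex compact set, η > 0, α ≥ 1, and let R : ℝⁿ → ℝ be differentiable and β-strongly convex with respect to the ℓ_p norm on F for some β > 0, with Bregman divergence D_R(a,b) = R(a) − R(b) − ⟨∇R(b), a−b⟩. Let x₀ = 0 and x₁,…,x_T ∈ [0,1]ⁿ, and define the Accurate Mirror Descent iterates: g₁ = f₁ ∈ F minimizes R over F; g_{t+1} ∈ F minimizes g ↦ η⟨g, x_t⟩ + D_R(g, g_t) over F; and f_{t+1} ∈ F minimizes f ↦ ηα⟨f, x_t⟩ + D_R(f, g_{t+1}) over F. Then for every f' ∈ F: Σ_{t=1}^T (⟨f_t, x_t⟩ − (1/α)⟨f', x_t⟩ − ((α−1)/α)⟨g_{t+1}, x_t⟩) ≤ (ηα/(2β)) Σ_{t=1}^T ‖x_t − x_{t-1}‖_q² + R_max²/(ηα), where R_max² := max_{f∈F} R(f) − min_{f∈F} R(f). -/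

import Mathlib

/-!
Each round is controlled by the first-order optimality ("three-point") inequality of a Bregman
proximal step: testing the step that produces `g (t+1)` against `f'`, and the step that produces
`f t` against `g (t+1)` (for `t = 1` this step is trivial since `f 1 = g 1` and `x 0 = 0`), bounds
the `t`-th term by `⟨f t - g (t+1), x t - x (t-1)⟩` plus Bregman divergences. Hölder and Young
bound that pairing by `β/(2ηα) ‖f t - g (t+1)‖_p² + ηα/(2β) ‖x t - x (t-1)‖_q²`, and strong
convexity absorbs the first summand into `D_R(g (t+1), f t)`. What is left telescopes to
`(D_R(f', g 1) - D_R(f', g (T+1))) / (ηα)`, and `D_R(f', g 1) ≤ R f' - R (g 1)` because `g 1`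
minimises `R` on `F`.
-/

open scoped BigOperators ENNReal

noncomputable section

/-- The bilinear pairing `⟨a, b⟩ = ∑ i, a i * b i` on `ℝⁿ`. -/
def ip {n : ℕ} (a b : Fin n → ℝ) : ℝ := ∑ i, a i * b i

/-- The `ℓ_p` norm on `ℝⁿ`, for `p ∈ [1, ∞]` (`‖a‖_∞ = max_i |a i|`). -/
def lpNorm {n : ℕ} (p : ℝ≥0∞) (a : Fin n → ℝ) : ℝ :=
  if p = ⊤ then ⨆ i, |a i| else (∑ i, |a i| ^ p.toReal) ^ (1 / p.toReal)

/-- `R` is `β`-strongly convex with respect to the `ℓ_p` norm on the convex set `F`. -/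
def StronglyConvexOnWrt {n : ℕ} (F : Set (Fin n → ℝ)) (β : ℝ) (p : ℝ≥0∞)
    (R : (Fin n → ℝ) → ℝ) : Prop :=
  ∀ a ∈ F, ∀ b ∈ F, ∀ l : ℝ, 0 ≤ l → l ≤ 1 →
    R (l • a + (1 - l) • b) ≤
      l * R a + (1 - l) * R b - β / 2 * l * (1 - l) * (lpNorm p (a - b)) ^ 2

/-- The Bregman divergence `D_R(a,b) = R a - R b - ⟨∇R b, a - b⟩`. -/
def bregman {n : ℕ} (R : (Fin n → ℝ) → ℝ) (a b : Fin n → ℝ) : ℝ :=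
  R a - R b - fderiv ℝ R b (a - b)

theorem IsCompact.sub_le_sSup_image_sub_sInf_image {α : Type*} [TopologicalSpace α] {s : Set α}
    {f : α → ℝ} (hs : IsCompact s) (hf : ContinuousOn f s) {a b : α} (ha : a ∈ s) (hb : b ∈ s) :
    f a - f b ≤ sSup (f '' s) - sInf (f '' s) :=
  have hfs := hs.image_of_continuousOn hf
  sub_le_sub (le_csSup hfs.bddAbove (Set.mem_image_of_mem f ha))
    (csInf_le hfs.bddBelow (Set.mem_image_of_mem f hb))

theorem Finset.sum_Icc_le_sum_add_sub {T : ℕ} {a b c : ℕ → ℝ}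
    (h : ∀ t ∈ Finset.Icc 1 T, a t ≤ b t + (c t - c (t + 1))) :
    ∑ t ∈ Finset.Icc 1 T, a t ≤ ∑ t ∈ Finset.Icc 1 T, b t + (c 1 - c (T + 1)) := by
  have htel : ∑ t ∈ Finset.Icc 1 T, (c t - c (t + 1)) = c 1 - c (T + 1) := by
    rw [← Finset.Ico_add_one_right_eq_Icc, ← neg_sub, ← Finset.sum_Ico_sub (f := c) (by omega),
      ← Finset.sum_neg_distrib]
    simp only [neg_sub]
  rw [← htel, ← Finset.sum_add_distrib]
  exact Finset.sum_le_sum h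

theorem IsMinOn.hasFDerivAt_sub_nonneg {E : Type*} [NormedAddCommGroup E] [NormedSpace ℝ E]
    {f : E → ℝ} {f' : E →L[ℝ] ℝ} {s : Set E} {a b : E} (h : IsMinOn f s a) (hs : Convex ℝ s)
    (ha : a ∈ s) (hb : b ∈ s) (hf : HasFDerivAt f f' a) : 0 ≤ f' (b - a) :=
  h.localize.hasFDerivWithinAt_nonneg hf.hasFDerivWithinAt
    (sub_mem_posTangentConeAt_of_segment_subset (hs.segment_subset ha hb))

section

variable {n : ℕ}

lemma ip_sub_left (a b y : Fin n → ℝ) : ip (a - b) y = ip a y - ip b y := by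
  simp [ip, sub_mul, Finset.sum_sub_distrib]

lemma ip_sub_right (a y z : Fin n → ℝ) : ip a (y - z) = ip a y - ip a z := by
  simp [ip, mul_sub, Finset.sum_sub_distrib]

lemma ip_zero_right (a : Fin n → ℝ) : ip a 0 = 0 := by
  simp [ip]

lemma ip_comm (a b : Fin n → ℝ) : ip a b = ip b a := by
  simp [ip, mul_comm]

lemma hasFDerivAt_ip_left (y w : Fin n → ℝ) :
    HasFDerivAt (fun u => ip u y)
      (∑ i, y i • ContinuousLinearMap.proj (R := ℝ) (φ := fun _ : Fin n => ℝ) i) w :=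
  HasFDerivAt.fun_sum fun i _ =>
    (ContinuousLinearMap.proj (R := ℝ) (φ := fun _ : Fin n => ℝ) i).hasFDerivAt.mul_const (y i)

lemma hasDerivAt_comp_add_smul {R : (Fin n → ℝ) → ℝ} {b : Fin n → ℝ}
    (hR : DifferentiableAt ℝ R b) (d : Fin n → ℝ) :
    HasDerivAt (fun l : ℝ => R (b + l • d)) (fderiv ℝ R b d) 0 := by
  have hline : HasDerivAt (fun l : ℝ => b + l • d) d 0 := by
    simpa using ((hasDerivAt_id (0 : ℝ)).smul_const d).const_add b
  have hR' : HasFDerivAt R (fderiv ℝ R b) (b + (0 : ℝ) • d) := by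
    simpa using hR.hasFDerivAt
  exact hR'.comp_hasDerivAt 0 hline

lemma lpNorm_one (a : Fin n → ℝ) : lpNorm 1 a = ∑ i, |a i| := by
  simp [lpNorm]

lemma lpNorm_top (a : Fin n → ℝ) : lpNorm ⊤ a = ⨆ i, |a i| := by
  simp [lpNorm]

lemma lpNorm_sub_comm (p : ℝ≥0∞) (a b : Fin n → ℝ) : lpNorm p (a - b) = lpNorm p (b - a) := by
  simp only [lpNorm, Pi.sub_apply, abs_sub_comm (a _)]

lemma ip_le_lpNorm_one_mul_lpNorm_top (a b : Fin n → ℝ) : ip a b ≤ lpNorm 1 a * lpNorm ⊤ b := by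
  rw [lpNorm_one, lpNorm_top, Finset.sum_mul]
  refine Finset.sum_le_sum fun i _ => ?_
  calc a i * b i ≤ |a i| * |b i| := abs_mul (a i) (b i) ▸ le_abs_self _
    _ ≤ |a i| * ⨆ j, |b j| := mul_le_mul_of_nonneg_left
      (le_ciSup (f := fun j => |b j|) (Set.finite_range _).bddAbove i) (abs_nonneg _)

lemma ip_le_lpNorm_mul_lpNorm {p q : ℝ≥0∞} [p.HolderConjugate q] (a b : Fin n → ℝ) :
    ip a b ≤ lpNorm p a * lpNorm q b := by
  by_cases hp : p = ⊤
  · obtain rfl := (ENNReal.HolderConjugate.eq_top_iff_eq_one p q).1 hp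
    subst hp
    rw [ip_comm, mul_comm]
    exact ip_le_lpNorm_one_mul_lpNorm_top b a
  by_cases hq : q = ⊤
  · obtain rfl := (ENNReal.HolderConjugate.eq_top_iff_eq_one q p).1 hq
    subst hq
    exact ip_le_lpNorm_one_mul_lpNorm_top a b
  simp only [lpNorm, if_neg hp, if_neg hq]
  exact Real.inner_le_Lp_mul_Lq _ a b (ENNReal.HolderConjugate.toReal_of_ne_top hp hq)

lemma bregman_self (R : (Fin n → ℝ) → ℝ) (w : Fin n → ℝ) : bregman R w w = 0 := by
  simp [bregman]

lemma bregman_sub_bregman_sub_bregman (R : (Fin n → ℝ) → ℝ) (u v w : Fin n → ℝ) :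
    bregman R u v - bregman R u w - bregman R w v =
      fderiv ℝ R w (u - w) - fderiv ℝ R v (u - w) := by
  simp only [bregman]
  have : u - v = (u - w) + (w - v) := by abel
  rw [this, map_add]
  ring

lemma StronglyConvexOnWrt.mul_lpNorm_sq_le_bregman {F : Set (Fin n → ℝ)} {β : ℝ} {p : ℝ≥0∞}
    {R : (Fin n → ℝ) → ℝ} (hR : StronglyConvexOnWrt F β p R) {a b : Fin n → ℝ} (ha : a ∈ F)
    (hb : b ∈ F) (hRb : DifferentiableAt ℝ R b) :
    β / 2 * lpNorm p (a - b) ^ 2 ≤ bregman R a b := by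
  obtain ⟨K, hK⟩ : ∃ K, K = β / 2 * lpNorm p (a - b) ^ 2 := ⟨_, rfl⟩
  -- strong convexity on the segment from `b` to `a` says exactly that `φ` is minimal at `0`
  let φ : ℝ → ℝ := fun l => l * (R a - R b - K) + K * l ^ 2 - R (b + l • (a - b))
  have hmin : IsMinOn φ (Set.Icc 0 1) 0 := isMinOn_iff.2 fun l hl => by
    have h := hR a ha b hb l hl.1 hl.2
    rw [show l • a + (1 - l) • b = b + l • (a - b) by module] at h
    have hK' : β / 2 * l * (1 - l) * lpNorm p (a - b) ^ 2 = K * l - K * l ^ 2 := by rw [hK]; ring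
    have hφ0 : φ 0 = -R b := by simp [φ]
    rw [hφ0]
    linarith
  have hφ : HasDerivAt φ (R a - R b - K - fderiv ℝ R b (a - b)) 0 := by
    have := (((hasDerivAt_id (0 : ℝ)).mul_const (R a - R b - K)).add
      ((hasDerivAt_pow 2 (0 : ℝ)).const_mul K)).sub (hasDerivAt_comp_add_smul hRb (a - b))
    exact this.congr_deriv (by simp)
  have := hmin.hasFDerivAt_sub_nonneg (b := 1) (convex_Icc 0 1) (by simp) (by simp) hφ.hasFDerivAt
  simp only [sub_zero, ContinuousLinearMap.toSpanSingleton_apply, one_smul] at this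
  simp only [bregman]
  linarith

lemma StronglyConvexOnWrt.bregman_nonneg {F : Set (Fin n → ℝ)} {β : ℝ} {p : ℝ≥0∞}
    {R : (Fin n → ℝ) → ℝ} (hR : StronglyConvexOnWrt F β p R) (hβ : 0 ≤ β) {a b : Fin n → ℝ}
    (ha : a ∈ F) (hb : b ∈ F) (hRb : DifferentiableAt ℝ R b) : 0 ≤ bregman R a b :=
  (by positivity : 0 ≤ β / 2 * lpNorm p (a - b) ^ 2).trans (hR.mul_lpNorm_sq_le_bregman ha hb hRb)

lemma IsMinOn.mul_ip_sub_ip_le_bregman {F : Set (Fin n → ℝ)} (hF : Convex ℝ F)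
    {R : (Fin n → ℝ) → ℝ} {κ : ℝ} {y v w : Fin n → ℝ}
    (hmin : IsMinOn (fun u => κ * ip u y + bregman R u v) F w) (hw : w ∈ F)
    (hRw : DifferentiableAt ℝ R w) {u : Fin n → ℝ} (hu : u ∈ F) :
    κ * ip w y - κ * ip u y ≤ bregman R u v - bregman R u w - bregman R w v := by
  have hobj := ((hasFDerivAt_ip_left y w).const_mul κ).add ((hRw.hasFDerivAt.sub_const (R v)).sub
    ((fderiv ℝ R v).hasFDerivAt.comp w ((hasFDerivAt_id w).sub_const v)))
  have h : 0 ≤ κ * ip (u - w) y + (fderiv ℝ R w (u - w) - fderiv ℝ R v (u - w)) := by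
    simpa [ip, mul_comm] using hmin.hasFDerivAt_sub_nonneg hF hw hu hobj
  rw [bregman_sub_bregman_sub_bregman]
  rw [ip_sub_left] at h
  linarith

lemma IsMinOn.bregman_le_sub {F : Set (Fin n → ℝ)} (hF : Convex ℝ F) {R : (Fin n → ℝ) → ℝ}
    {a b : Fin n → ℝ} (hmin : IsMinOn R F b) (hb : b ∈ F) (ha : a ∈ F)
    (hRb : DifferentiableAt ℝ R b) : bregman R a b ≤ R a - R b := by
  have := hmin.hasFDerivAt_sub_nonneg hF hb ha hRb.hasFDerivAt
  simp only [bregman]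
  linarith

lemma amd_step_le {F : Set (Fin n → ℝ)} (hF : Convex ℝ F) {R : (Fin n → ℝ) → ℝ}
    (hR : Differentiable ℝ R) {β : ℝ} {p q : ℝ≥0∞} [p.HolderConjugate q]
    (hRsc : StronglyConvexOnWrt F β p R) (hβ : 0 < β) {η α : ℝ} (hη : 0 < η) (hα : 0 < α)
    {f' g g' f x' x : Fin n → ℝ} (hf' : f' ∈ F) (hg : g ∈ F) (hg' : g' ∈ F) (hf : f ∈ F)
    (hg'min : IsMinOn (fun u => η * ip u x + bregman R u g) F g')
    (hfmin : IsMinOn (fun u => η * α * ip u x' + bregman R u g) F f) :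
    ip f x - 1 / α * ip f' x - (α - 1) / α * ip g' x ≤
      η * α / (2 * β) * lpNorm q (x - x') ^ 2 +
        (bregman R f' g / (η * α) - bregman R f' g' / (η * α)) := by
  have hA := hg'min.mul_ip_sub_ip_le_bregman hF hg' (hR g') hf'
  have hB := hfmin.mul_ip_sub_ip_le_bregman hF hf (hR f) hg'
  have hC : 2 * β * (η * α * ip (f - g') (x - x')) ≤
      2 * β * bregman R g' f + (η * α) ^ 2 * lpNorm q (x - x') ^ 2 := by
    have hHolder : ip (f - g') (x - x') ≤ lpNorm p (f - g') * lpNorm q (x - x') :=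
      ip_le_lpNorm_mul_lpNorm _ _
    have hYoung := two_mul_le_add_sq (β * lpNorm p (f - g')) (η * α * lpNorm q (x - x'))
    have hsc := hRsc.mul_lpNorm_sq_le_bregman hg' hf (hR f)
    rw [lpNorm_sub_comm] at hsc
    have h2 := mul_le_mul_of_nonneg_left hHolder (by positivity : 0 ≤ 2 * β * (η * α))
    have h3 := mul_le_mul_of_nonneg_left hsc (by positivity : 0 ≤ 2 * β)
    linarith
  have hD := hRsc.bregman_nonneg hβ.le hf hg (hR g)
  rw [ip_sub_left, ip_sub_right, ip_sub_right] at hC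
  rw [← sub_nonneg]
  field_simp
  linear_combination 2 * β * hA + 2 * β * hB + hC + 2 * β * hD

end

theorem amd_regret_bound_general {n T : ℕ} (p q : ℝ≥0∞)
    (hpq : 1 / p + 1 / q = 1)
    (F : Set (Fin n → ℝ))
    (hFconv : Convex ℝ F) (hFcomp : IsCompact F)
    (η : ℝ) (hη : 0 < η) (α : ℝ) (hα : 1 ≤ α) (β : ℝ) (hβ : 0 < β)
    (R : (Fin n → ℝ) → ℝ) (hdiff : Differentiable ℝ R)
    (hRsc : StronglyConvexOnWrt F β p R)
    (x : ℕ → (Fin n → ℝ)) (hx0 : x 0 = 0)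
    (f g : ℕ → (Fin n → ℝ))
    (hg1 : g 1 ∈ F ∧ ∀ u ∈ F, R (g 1) ≤ R u) (hf1 : f 1 = g 1)
    (hg : ∀ t ∈ Finset.Icc 1 T, g (t + 1) ∈ F ∧
      ∀ u ∈ F, η * ip (g (t + 1)) (x t) + bregman R (g (t + 1)) (g t) ≤
        η * ip u (x t) + bregman R u (g t))
    (hf : ∀ t ∈ Finset.Icc 1 T, f (t + 1) ∈ F ∧
      ∀ u ∈ F, η * α * ip (f (t + 1)) (x t) + bregman R (f (t + 1)) (g (t + 1)) ≤
        η * α * ip u (x t) + bregman R u (g (t + 1))) :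
    ∀ f' ∈ F,
      (∑ t ∈ Finset.Icc 1 T,
        (ip (f t) (x t) - (1 / α) * ip f' (x t) - ((α - 1) / α) * ip (g (t + 1)) (x t))) ≤
      η * α / (2 * β) * (∑ t ∈ Finset.Icc 1 T, (lpNorm q (x t - x (t - 1))) ^ 2) +
        (sSup (R '' F) - sInf (R '' F)) / (η * α) := by
  intro f' hf'
  have : p.HolderConjugate q := ENNReal.holderConjugate_iff.2 (by simpa only [one_div] using hpq)
  have hg_mem : ∀ t ∈ Finset.Icc 1 (T + 1), g t ∈ F := by
    rintro (_ | _ | t) ht <;> rw [Finset.mem_Icc] at ht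
    · omega
    · exact hg1.1
    · exact (hg (t + 1) (Finset.mem_Icc.2 ⟨by omega, by omega⟩)).1
  have hf_min : ∀ t ∈ Finset.Icc 1 T,
      f t ∈ F ∧ IsMinOn (fun u => η * α * ip u (x (t - 1)) + bregman R u (g t)) F (f t) := by
    rintro (_ | _ | t) ht <;> rw [Finset.mem_Icc] at ht
    · omega
    · refine ⟨hf1 ▸ hg1.1, isMinOn_iff.2 fun u hu => ?_⟩
      simp only [Nat.sub_self, hx0, ip_zero_right, mul_zero, zero_add, hf1, bregman_self]
      exact hRsc.bregman_nonneg hβ.le hu hg1.1 (hdiff _)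
    · obtain ⟨hmem, hmin⟩ := hf (t + 1) (Finset.mem_Icc.2 ⟨by omega, by omega⟩)
      exact ⟨hmem, isMinOn_iff.2 hmin⟩
  have hstep := fun t ht => amd_step_le (q := q) hFconv hdiff hRsc hβ hη (by linarith) hf'
    (hg_mem t (Finset.Icc_subset_Icc_right T.le_succ ht)) (hg t ht).1 (hf_min t ht).1
    (isMinOn_iff.2 (hg t ht).2) (hf_min t ht).2
  refine (Finset.sum_Icc_le_sum_add_sub hstep).trans ?_
  rw [← Finset.mul_sum, ← sub_div]
  gcongr _ + ?_ / _
  have hDT := hRsc.bregman_nonneg hβ.le hf' (hg_mem (T + 1) (by simp)) (hdiff _)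
  have hD1 := (isMinOn_iff.2 hg1.2).bregman_le_sub hFconv hg1.1 hf' (hdiff _)
  have hRF := hFcomp.sub_le_sSup_image_sub_sInf_image hdiff.continuous.continuousOn hf' hg1.1
  linarith

/-- **Regret bound for Accurate Mirror Descent (Theorem 4 in the paper).**
For every `f' ∈ F`:
`∑_{t=1}^T (⟨f t, x t⟩ - (1/α)⟨f', x t⟩ - ((α-1)/α)⟨g (t+1), x t⟩)
  ≤ (η α/(2β)) ∑_{t=1}^T ‖x t - x (t-1)‖_q² + R_max²/(η α)`,
where `R_max² = max_{f∈F} R f - min_{f∈F} R f`. -/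
theorem amd_regret_bound {n T : ℕ} (p q : ℝ≥0∞)
    (hp : 1 ≤ p) (hq : 1 ≤ q) (hpq : 1 / p + 1 / q = 1)
    (F : Set (Fin n → ℝ)) (hF : F.Nonempty) (hFsub : F ⊆ Set.Icc 0 1)
    (hFconv : Convex ℝ F) (hFcomp : IsCompact F)
    (η : ℝ) (hη : 0 < η) (α : ℝ) (hα : 1 ≤ α) (β : ℝ) (hβ : 0 < β)
    (R : (Fin n → ℝ) → ℝ) (hdiff : Differentiable ℝ R)
    (hRsc : StronglyConvexOnWrt F β p R)
    (x : ℕ → (Fin n → ℝ)) (hx0 : x 0 = 0)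
    (hx : ∀ t ∈ Finset.Icc 1 T, x t ∈ Set.Icc (0 : Fin n → ℝ) 1)
    (f g : ℕ → (Fin n → ℝ))
    (hg1 : g 1 ∈ F ∧ ∀ u ∈ F, R (g 1) ≤ R u) (hf1 : f 1 = g 1)
    (hg : ∀ t ∈ Finset.Icc 1 T, g (t + 1) ∈ F ∧
      ∀ u ∈ F, η * ip (g (t + 1)) (x t) + bregman R (g (t + 1)) (g t) ≤
        η * ip u (x t) + bregman R u (g t))
    (hf : ∀ t ∈ Finset.Icc 1 T, f (t + 1) ∈ F ∧
      ∀ u ∈ F, η * α * ip (f (t + 1)) (x t) + bregman R (f (t + 1)) (g (t + 1)) ≤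
        η * α * ip u (x t) + bregman R u (g (t + 1))) :
    ∀ f' ∈ F,
      (∑ t ∈ Finset.Icc 1 T,
        (ip (f t) (x t) - (1 / α) * ip f' (x t) - ((α - 1) / α) * ip (g (t + 1)) (x t))) ≤
      η * α / (2 * β) * (∑ t ∈ Finset.Icc 1 T, (lpNorm q (x t - x (t - 1))) ^ 2) +
        (sSup (R '' F) - sInf (R '' F)) / (η * α) :=
  amd_regret_bound_general p q hpq F hFconv hFcomp η hη α hα β hβ R hdiff hRsc x hx0 f g hg1 hf1 hg
    hf
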